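/- arXiv:1111.4679 — 5 statements merged into one kernel-verified Lean document; each statement's English description precedes it below -/
import Mathlib

section
/- Let p be an odd prime, F a finite p-group, and σ an automorphism of F of order 2. If X = {t⁻¹σ(t) : t ∈ F} and X' = {s ∈ F : σ(s) = s⁻¹}, then X = X'. -/
/-- For an odd prime `p`, a finite `p`-group `F`, and an automorphism `σ`
of `F` of order 2, the set `X = {t⁻¹σ(t) : t ∈ F}` equals `X' = {s ∈ F : σ(s) = s⁻¹}`. -/
theorem stmt_0 {p : ℕ} [Fact p.Prime] (hp : Odd p) {F : Type*} [Group F] [Finite F]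
    (hF : IsPGroup p F) (σ : MulAut F) (hσ : orderOf σ = 2) :
    {x : F | ∃ t : F, x = t⁻¹ * σ t} = {s : F | σ s = s⁻¹} := by
  have h2 : ∀ x : F, σ (σ x) = x := by
    intro x
    have h : σ ^ 2 = 1 := by rw [← hσ]; exact pow_orderOf_eq_one σ
    have := congrArg (fun f : MulAut F => f x) h
    simpa [pow_two] using this
  ext x
  constructor
  · rintro ⟨t, rfl⟩
    show σ (t⁻¹ * σ t) = (t⁻¹ * σ t)⁻¹
    simp [map_mul, h2]
  · intro hs
    have hs : σ x = x⁻¹ := hs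
    -- order of x is odd
    obtain ⟨k, hk⟩ := hF x
    have hdvd : orderOf x ∣ p ^ k := orderOf_dvd_of_pow_eq_one hk
    obtain ⟨j, _, hj⟩ := (Nat.dvd_prime_pow (Fact.out : p.Prime)).mp hdvd
    have hodd : Odd (orderOf x) := hj ▸ hp.pow
    set n := orderOf x with hn
    have hpos : 0 < n := orderOf_pos x
    set m := (n - 1) / 2 with hm
    have h2m : 2 * m = n - 1 := by
      obtain ⟨c, hc⟩ := hodd
      omega
    have hxn1 : x ^ (n - 1) = x⁻¹ := by
      have : x ^ (n - 1) * x = 1 := by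
        rw [← pow_succ]
        have : n - 1 + 1 = n := by omega
        rw [this, hn, pow_orderOf_eq_one]
      exact eq_inv_of_mul_eq_one_left this
    refine ⟨x ^ m, ?_⟩
    have : σ (x ^ m) = (x⁻¹) ^ m := by rw [map_pow, hs]
    rw [this]
    rw [inv_pow, ← mul_inv_rev, ← pow_add, ← two_mul, h2m, hxn1, inv_inv]
end

section
/- Let p be a prime, G a finite p-group, and σ an automorphism of G of order 2 that acts as inversion on the abelianization G/[G,G]. Then the map G → B given by x ↦ x⁻¹σ(x), where B = {x ∈ G : σ(x) = x⁻¹}, is surjective, and each fiber is a right coset of A = {x ∈ G : σ(x) = x}. In particular |B| = |G|/|A|. -/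
/-- For a finite `p`-group `G` (`p` an odd prime) with an order-2 automorphism `σ`
acting as inversion on the abelianization, the map `x ↦ x⁻¹σ(x)` surjects onto
`B = {x : σ(x) = x⁻¹}`, its fibers are the right cosets of `A = {x : σ(x) = x}`,
and `|B|·|A| = |G|`. -/
theorem stmt_1 {p : ℕ} [Fact p.Prime] (hp : Odd p) {G : Type*} [Group G] [Finite G]
    (hG : IsPGroup p G) (σ : MulAut G) (hσ : orderOf σ = 2)
    (hab : ∀ y : G, Abelianization.of (σ y) = (Abelianization.of y)⁻¹) :
    (∀ b : G, σ b = b⁻¹ → ∃ x : G, x⁻¹ * σ x = b) ∧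
    (∀ x y : G, x⁻¹ * σ x = y⁻¹ * σ y ↔ ∃ a : G, σ a = a ∧ x = a * y) ∧
    Nat.card {b : G // σ b = b⁻¹} * Nat.card {a : G // σ a = a} = Nat.card G := by
  have hσ2 : ∀ x : G, σ (σ x) = x := by
    have h : σ * σ = 1 := by rw [← sq, ← hσ]; exact pow_orderOf_eq_one σ
    intro x
    have := congrArg (fun f : MulAut G => f x) h
    simpa using this
  -- Part 1: surjectivity
  have part1 : ∀ b : G, σ b = b⁻¹ → ∃ x : G, x⁻¹ * σ x = b := by
    intro b hb
    have hodd : Odd (orderOf b) := by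
      obtain ⟨k, hk⟩ := hG b
      obtain ⟨m, _, hm⟩ := (Nat.dvd_prime_pow (Fact.out : p.Prime)).mp
        (orderOf_dvd_of_pow_eq_one hk)
      rw [hm]; exact hp.pow
    obtain ⟨m, hm⟩ := hodd
    refine ⟨b ^ m, ?_⟩
    have h1 : b ^ m * b ^ m * b = 1 := by
      rw [← pow_add, ← pow_succ, ← two_mul, ← hm]
      exact pow_orderOf_eq_one b
    have h2 : σ (b ^ m) = (b ^ m)⁻¹ := by rw [map_pow, hb, inv_pow]
    rw [h2]
    rw [← mul_inv_rev]
    exact inv_eq_of_mul_eq_one_right h1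
  -- Part 2: fibers
  have part2 : ∀ x y : G, x⁻¹ * σ x = y⁻¹ * σ y ↔ ∃ a : G, σ a = a ∧ x = a * y := by
    intro x y
    constructor
    · intro h
      refine ⟨x * y⁻¹, ?_, by group⟩
      have : σ x = x * y⁻¹ * σ y := by
        rw [eq_mul_of_inv_mul_eq h]; group
      rw [map_mul, map_inv, this]
      group
    · rintro ⟨a, ha, rfl⟩
      rw [map_mul, ha]
      group
  refine ⟨part1, part2, ?_⟩
  -- Part 3: counting
  set A : Subgroup G := σ.toMonoidHom.eqLocus (MonoidHom.id G) with hA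
  have hmemA : ∀ a : G, a ∈ A ↔ σ a = a := fun a => Iff.rfl
  have hBmem : ∀ x : G, σ (σ x * x⁻¹) = (σ x * x⁻¹)⁻¹ := by
    intro x
    rw [map_mul, map_inv, hσ2, mul_inv_rev, inv_inv]
  let f : G → {b : G // σ b = b⁻¹} := fun x => ⟨σ x * x⁻¹, hBmem x⟩
  have hf : ∀ x y : G, f x = f y ↔ x⁻¹ * y ∈ A := by
    intro x y
    rw [Subtype.ext_iff]
    show σ x * x⁻¹ = σ y * y⁻¹ ↔ σ (x⁻¹ * y) = x⁻¹ * y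
    rw [map_mul, map_inv]
    constructor
    · intro h
      have : σ y = σ x * x⁻¹ * y := by rw [h]; group
      rw [this]; group
    · intro h
      have h2 : σ y = σ x * x⁻¹ * y := by
        rw [eq_mul_of_inv_mul_eq h]; group
      rw [h2]; group
  have hfsurj : Function.Surjective f := by
    rintro ⟨b, hb⟩
    have hbinv : σ b⁻¹ = (b⁻¹)⁻¹ := by rw [map_inv, hb, inv_inv]
    obtain ⟨x, hx⟩ := part1 b⁻¹ hbinv
    refine ⟨x⁻¹, ?_⟩
    apply Subtype.ext
    show σ x⁻¹ * x⁻¹⁻¹ = b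
    rw [map_inv, inv_inv]
    have : σ x = x * b⁻¹ := by rw [← hx]; group
    rw [this]; group
  -- lift f to the quotient
  let fbar : G ⧸ A → {b : G // σ b = b⁻¹} :=
    Quotient.lift f (fun x y (h : _) => by
      rw [hf]
      exact (QuotientGroup.leftRel_apply).mp h)
  have hbij : Function.Bijective fbar := by
    constructor
    · intro u v
      induction u using Quotient.inductionOn
      induction v using Quotient.inductionOn
      intro h
      exact Quotient.sound ((QuotientGroup.leftRel_apply).mpr ((hf _ _).mp h))
    · intro b
      obtain ⟨x, hx⟩ := hfsurj b
      exact ⟨Quotient.mk _ x, hx⟩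
  have hcardB : Nat.card {b : G // σ b = b⁻¹} = Nat.card (G ⧸ A) :=
    (Nat.card_eq_of_bijective fbar hbij).symm
  have hcardA : Nat.card {a : G // σ a = a} = Nat.card A := rfl
  rw [hcardB, hcardA]
  exact (Subgroup.card_eq_card_quotient_mul_card_subgroup A).symm
end

section
/- Let p be an odd prime and G a finite p-group. Any two automorphisms of G of order 2 that induce the same automorphism on G/Φ(G) are conjugate in Aut(G). Consequently, the number of fixed points z(G) of an order-2 automorphism acting as inversion on G^ab is independent of the choice of such automorphism. -/
/-!
If `σ, τ` are involutions agreeing modulo `Φ(G)`, then `τσ` lies in the group `K` of automorphisms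
acting trivially on `G/Φ(G)`. An involution `b ∈ K` is trivial: for each `x`, `g = x⁻¹ b(x) ∈ Φ(G)`
is inverted by `b` and has odd order, so it has a square root `h ∈ ⟨g⟩` and `xh` is fixed by `b`;
hence the fixed points of `b` together with `Φ(G)` generate `G`, so every point is fixed. By Cauchy,
`K` has odd order, so `τσ` has odd order, and two involutions whose product `a` has odd order are
conjugate by the square root of `a` in `⟨a⟩`. For the second claim, `[G, G] ≤ Φ(G)` since maximal
subgroups of a nilpotent group are normal with cyclic quotient, and conjugate automorphisms have
equally many fixed points.
-/

theorem exists_pow_sq_eq_of_odd_orderOf {M : Type*} [Monoid M] {g : M} (h : Odd (orderOf g)) :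
    ∃ n : ℕ, (g ^ n) ^ 2 = g := by
  obtain ⟨t, ht⟩ := h
  refine ⟨t + 1, ?_⟩
  rw [← pow_mul, show (t + 1) * 2 = orderOf g + 1 by omega, pow_succ, pow_orderOf_eq_one, one_mul]

theorem isConj_of_sq_eq_one_of_odd_orderOf_mul {G : Type*} [Group G] {σ τ : G} (hσ : σ ^ 2 = 1)
    (hτ : τ ^ 2 = 1) (h : Odd (orderOf (τ * σ))) : IsConj σ τ := by
  obtain ⟨n, hn⟩ := exists_pow_sq_eq_of_odd_orderOf h
  have hσinv : σ⁻¹ = σ := inv_eq_of_mul_eq_one_right (sq σ ▸ hσ)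
  have hτinv : τ⁻¹ = τ := inv_eq_of_mul_eq_one_right (sq τ ▸ hτ)
  have hconj : σ * (τ * σ) * σ⁻¹ = (τ * σ)⁻¹ := by
    rw [mul_inv_rev, hσinv, hτinv, mul_assoc, mul_assoc, ← sq, hσ, mul_one]
  have hr : σ * (τ * σ) ^ n * σ⁻¹ = ((τ * σ) ^ n)⁻¹ := by rw [← conj_pow, hconj, inv_pow]
  generalize (τ * σ) ^ n = r at hn hr
  refine isConj_iff.mpr ⟨r, ?_⟩
  calc r * σ * r⁻¹ = r * (σ * r * σ⁻¹)⁻¹ * σ := by group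
    _ = r ^ 2 * σ := by rw [hr, inv_inv, sq]
    _ = τ := by rw [hn, mul_assoc, ← sq, hσ, mul_one]

theorem IsConj.card_fixedBy {M α : Type*} [Group M] [MulAction M α] {σ τ : M}
    (h : IsConj σ τ) : Nat.card (MulAction.fixedBy α σ) = Nat.card (MulAction.fixedBy α τ) := by
  obtain ⟨c, rfl⟩ := isConj_iff.mp h
  rw [← MulAction.smul_fixedBy, Nat.card_coe_set_eq, Nat.card_coe_set_eq,
    Set.ncard_smul_set]

section

variable {G : Type*} [Group G]

theorem commutator_le_of_isCoatom {M : Subgroup G} [M.Normal] (hM : IsCoatom M) :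
    commutator G ≤ M := by
  obtain ⟨x, hx⟩ := (SetLike.lt_iff_le_and_exists.mp hM.1.lt_top).2
  refine Subgroup.Normal.commutator_le_of_self_sup_commutative_eq_top
    (hM.2 _ (left_lt_sup.mpr ?_)) (Subgroup.zpowers_isMulCommutative x)
  rw [Subgroup.zpowers_le]
  exact hx.2

theorem commutator_le_frattini [Group.IsNilpotent G] : commutator G ≤ frattini G :=
  le_iInf₂ fun M hM =>
    have := Subgroup.NormalizerCondition.normal_of_coatom M
      Group.normalizerCondition_of_isNilpotent hM
    commutator_le_of_isCoatom hM

namespace MulAut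

/-- For `N = frattini G` this is the kernel of `Aut(G) → Aut(G/Φ(G))`. -/
def fixingQuotient (N : Subgroup G) : Subgroup (MulAut G) where
  carrier := {b | ∀ x : G, (b x : G ⧸ N) = x}
  one_mem' _ := rfl
  mul_mem' {b c} hb hc x := (hb (c x)).trans (hc x)
  inv_mem' {b} hb x := by simpa using (hb (b⁻¹ x)).symm

theorem apply_apply_of_sq_eq_one {b : MulAut G} (hb : b ^ 2 = 1) (x : G) : b (b x) = x := by
  rw [← MulAut.mul_apply, ← sq, hb, MulAut.one_apply]

theorem eqLocus_sup_eq_top_of_sq_eq_one {N : Subgroup G} (hG : Odd (Nat.card G)) {b : MulAut G}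
    (hb2 : b ^ 2 = 1) (hb : b ∈ fixingQuotient N) :
    (b : G →* G).eqLocus (MonoidHom.id G) ⊔ N = ⊤ := by
  refine eq_top_iff.mpr fun x _ => ?_
  set g := x⁻¹ * b x
  have hgN : g ∈ N := QuotientGroup.eq.mp (hb x).symm
  have hbg : b g = g⁻¹ := by simp [g, apply_apply_of_sq_eq_one hb2]
  obtain ⟨n, hn⟩ := exists_pow_sq_eq_of_odd_orderOf (hG.of_dvd_nat (orderOf_dvd_natCard g))
  have hhN : g ^ n ∈ N := pow_mem hgN n
  have hbh : b (g ^ n) = (g ^ n)⁻¹ := by rw [map_pow, hbg, inv_pow]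
  generalize g ^ n = h at hn hhN hbh
  have hfix : b (x * h) = x * h := by
    calc b (x * h) = x * g * h⁻¹ := by rw [map_mul, hbh, mul_inv_cancel_left]
      _ = x * h := by rw [← hn, sq, mul_assoc, mul_assoc, mul_inv_cancel, mul_one]
  rw [← mul_inv_cancel_right x h]
  exact mul_mem (Subgroup.mem_sup_left hfix) (Subgroup.mem_sup_right (inv_mem hhN))

theorem eq_one_of_mem_fixingQuotient_frattini [Finite G] (hG : Odd (Nat.card G)) {b : MulAut G}
    (hb2 : b ^ 2 = 1) (hb : b ∈ fixingQuotient (frattini G)) : b = 1 := by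
  have htop := frattini_nongenerating (eqLocus_sup_eq_top_of_sq_eq_one hG hb2 hb)
  ext x
  exact (htop ▸ Subgroup.mem_top x : x ∈ (b : G →* G).eqLocus (MonoidHom.id G))

theorem odd_card_fixingQuotient_frattini [Finite G] (hG : Odd (Nat.card G)) :
    Odd (Nat.card (fixingQuotient (frattini G))) := by
  by_contra hev
  rw [Nat.not_odd_iff_even, even_iff_two_dvd] at hev
  obtain ⟨b, hb⟩ := exists_prime_orderOf_dvd_card' 2 hev
  have hb2 : (b : MulAut G) ^ 2 = 1 := by
    rw [← hb, ← Subgroup.coe_pow, pow_orderOf_eq_one, Subgroup.coe_one]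
  have hb1 : b = 1 := Subtype.ext (eq_one_of_mem_fixingQuotient_frattini hG hb2 b.2)
  simp [hb1] at hb

end MulAut

end

/-- For a finite `p`-group `G` (`p` odd), any two order-2 automorphisms of `G`
inducing the same automorphism on `G/Φ(G)` are conjugate in `Aut(G)`; consequently the
number of fixed points of an order-2 automorphism acting as inversion on `G^ab` does not
depend on the choice of such an automorphism. -/
theorem stmt_7 {p : ℕ} [Fact p.Prime] (hp : Odd p) {G : Type*} [Group G] [Finite G]
    (hG : IsPGroup p G) :
    (∀ σ τ : MulAut G, orderOf σ = 2 → orderOf τ = 2 →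
      (∀ x : G, (QuotientGroup.mk (σ x) : G ⧸ frattini G) = QuotientGroup.mk (τ x)) →
      IsConj σ τ) ∧
    (∀ σ τ : MulAut G, orderOf σ = 2 → orderOf τ = 2 →
      (∀ x : G, Abelianization.of (σ x) = (Abelianization.of x)⁻¹) →
      (∀ x : G, Abelianization.of (τ x) = (Abelianization.of x)⁻¹) →
      Nat.card {x : G // σ x = x} = Nat.card {x : G // τ x = x}) := by
  have hodd : Odd (Nat.card G) := by
    obtain ⟨n, hn⟩ := IsPGroup.iff_card.mp hG
    exact hn ▸ hp.pow
  have hconj : ∀ σ τ : MulAut G, orderOf σ = 2 → orderOf τ = 2 →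
      (∀ x : G, (QuotientGroup.mk (σ x) : G ⧸ frattini G) = QuotientGroup.mk (τ x)) →
      IsConj σ τ := by
    intro σ τ hσ hτ h
    have hσ2 : σ ^ 2 = 1 := hσ ▸ pow_orderOf_eq_one σ
    have hτσ : τ * σ ∈ MulAut.fixingQuotient (frattini G) := fun x => by
      rw [MulAut.mul_apply, ← h, MulAut.apply_apply_of_sq_eq_one hσ2]
    have hodd_τσ : Odd (orderOf (τ * σ)) :=
      (MulAut.odd_card_fixingQuotient_frattini hodd).of_dvd_nat
        (Subgroup.orderOf_dvd_natCard _ hτσ)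
    exact isConj_of_sq_eq_one_of_odd_orderOf_mul hσ2 (hτ ▸ pow_orderOf_eq_one τ) hodd_τσ
  refine ⟨hconj, fun σ τ hσ hτ hσab hτab => ?_⟩
  have := hG.isNilpotent
  have h : ∀ x : G, (QuotientGroup.mk (σ x) : G ⧸ frattini G) = QuotientGroup.mk (τ x) :=
    fun x => QuotientGroup.eq.mpr <| commutator_le_frattini <|
      QuotientGroup.eq.mp ((hσab x).trans (hτab x).symm)
  exact (hconj σ τ hσ hτ h).card_fixedBy (α := G)
end

section
/- Let G be a finite p-group of p-class c and C a central extension 1 → K → C → G → 1 with K = P_c(C) (so C is an immediate descendant of G). If the abelianization of G equals the abelianization of G/P_{c−1}(G), then K is contained in the derived subgroup of C; hence C is a stem extension of G. -/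
open scoped commutatorElement

/-- The lower `p`-central series: `P₀(G) = G`, `P_{n+1}(G) = [G,P_n(G)]·P_n(G)^p`. -/
def lowerPCentral (p : ℕ) (G : Type*) [Group G] : ℕ → Subgroup G
  | 0 => ⊤
  | n + 1 => Subgroup.normalClosure
      ({x | ∃ y ∈ lowerPCentral p G n, x = y ^ p} ∪
       {x | ∃ g : G, ∃ y ∈ lowerPCentral p G n, x = ⁅g, y⁆})

instance lowerPCentral_normal (p : ℕ) (G : Type*) [Group G] :
    ∀ n : ℕ, (lowerPCentral p G n).Normal
  | 0 => inferInstanceAs (⊤ : Subgroup G).Normal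
  | _ + 1 => Subgroup.normalClosure_normal

/-! `P_c(C)` is generated by `p`-th powers and commutators of elements of
`P_{c-1}(C)`. Lifting `P_{c-1}(G) ≤ [G,G]` to `C` writes each `y ∈ P_{c-1}(C)` as `d k` with
`d ∈ [C,C]` and `k ∈ P_c(C)`; since `P_{c+1}(C) = 1`, `k` is central of order dividing `p`,
so `y ^ p = d ^ p ∈ [C,C]`. -/

section LowerPCentral

variable {p : ℕ} {C G : Type*} [Group C] [Group G]

lemma pow_mem_lowerPCentral_succ {n : ℕ} {y : C} (hy : y ∈ lowerPCentral p C n) :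
    y ^ p ∈ lowerPCentral p C (n + 1) :=
  Subgroup.subset_normalClosure (Or.inl ⟨y, hy, rfl⟩)

lemma commutatorElement_mem_lowerPCentral_succ {n : ℕ} (g : C) {y : C}
    (hy : y ∈ lowerPCentral p C n) : ⁅g, y⁆ ∈ lowerPCentral p C (n + 1) :=
  Subgroup.subset_normalClosure (Or.inr ⟨g, y, hy, rfl⟩)

lemma lowerPCentral_le_center {n : ℕ} (h : lowerPCentral p C (n + 1) = ⊥) :
    lowerPCentral p C n ≤ Subgroup.center C := fun _ hk =>
  Subgroup.mem_center_iff.mpr fun g => commutatorElement_eq_one_iff_mul_comm.mp <|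
    Subgroup.mem_bot.mp (h ▸ commutatorElement_mem_lowerPCentral_succ g hk)

lemma pow_eq_one_of_mem_lowerPCentral {n : ℕ} (h : lowerPCentral p C (n + 1) = ⊥) {k : C}
    (hk : k ∈ lowerPCentral p C n) : k ^ p = 1 :=
  Subgroup.mem_bot.mp (h ▸ pow_mem_lowerPCentral_succ hk)

lemma map_lowerPCentral {π : C →* G} (hπ : Function.Surjective π) (n : ℕ) :
    (lowerPCentral p C n).map π = lowerPCentral p G n := by
  induction n with
  | zero => exact Subgroup.map_top_of_surjective π hπ
  | succ n ih =>
    refine (Subgroup.map_normalClosure _ π hπ).trans (congrArg _ ?_)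
    ext x
    constructor
    · rintro ⟨z, ⟨y, hy, rfl⟩ | ⟨g, y, hy, rfl⟩, rfl⟩
      · exact Or.inl ⟨π y, ih ▸ Subgroup.mem_map_of_mem π hy, map_pow π y p⟩
      · exact Or.inr ⟨π g, π y, ih ▸ Subgroup.mem_map_of_mem π hy, map_commutatorElement π g y⟩
    · rintro (⟨y, hy, rfl⟩ | ⟨g, y, hy, rfl⟩) <;> rw [← ih] at hy <;> obtain ⟨z, hz, rfl⟩ := hy
      · exact ⟨z ^ p, Or.inl ⟨z, hz, rfl⟩, map_pow π z p⟩
      · obtain ⟨h, rfl⟩ := hπ g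
        exact ⟨⁅h, z⁆, Or.inr ⟨h, z, hz, rfl⟩, map_commutatorElement π h z⟩

lemma lowerPCentral_succ_le_commutator {n : ℕ}
    (hle : lowerPCentral p C n ≤ commutator C ⊔ lowerPCentral p C (n + 1))
    (hbot : lowerPCentral p C (n + 2) = ⊥) :
    lowerPCentral p C (n + 1) ≤ commutator C := by
  refine Subgroup.normalClosure_le_normal ?_
  rintro x (⟨y, hy, rfl⟩ | ⟨g, y, -, rfl⟩)
  · have hy' := hle hy
    rw [← SetLike.mem_coe, Subgroup.mul_normal] at hy'
    obtain ⟨d, hd, k, hk, rfl⟩ := hy'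
    have hdk : Commute d k := Subgroup.mem_center_iff.mp (lowerPCentral_le_center hbot hk) d
    rw [hdk.mul_pow, pow_eq_one_of_mem_lowerPCentral hbot hk, mul_one]
    exact pow_mem hd p
  · exact Subgroup.commutator_mem_commutator (Subgroup.mem_top g) (Subgroup.mem_top y)

end LowerPCentral

lemma comap_commutator_of_surjective {C G : Type*} [Group C] [Group G] {π : C →* G}
    (hπ : Function.Surjective π) : (commutator G).comap π = commutator C ⊔ π.ker := by
  rw [← Subgroup.comap_map_eq, commutator_def C, Subgroup.map_commutator,
    Subgroup.map_top_of_surjective π hπ, commutator_def]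

theorem stmt_10_general {p : ℕ} {G C : Type*} [Group G] [Group C]
    {c : ℕ} (hc1 : 1 ≤ c)
    (π : C →* G) (hsurj : Function.Surjective π)
    (hker : π.ker = lowerPCentral p C c)
    (hCclass : lowerPCentral p C (c + 1) = ⊥)
    (hab : lowerPCentral p G (c - 1) ≤ commutator G) :
    π.ker ≤ commutator C ⊓ Subgroup.center C := by
  obtain ⟨n, rfl⟩ : ∃ n, c = n + 1 := ⟨c - 1, by omega⟩
  rw [Nat.add_sub_cancel] at hab
  have hlift : lowerPCentral p C n ≤ commutator C ⊔ lowerPCentral p C (n + 1) := by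
    rwa [← hker, ← comap_commutator_of_surjective hsurj, ← Subgroup.map_le_iff_le_comap,
      map_lowerPCentral hsurj]
  rw [hker]
  exact le_inf (lowerPCentral_succ_le_commutator hlift hCclass) (lowerPCentral_le_center hCclass)

/-- Let `G` be a finite `p`-group of `p`-class `c` and `C` an immediate
descendant of `G`, i.e. `C` has `p`-class `c+1` and `C/P_c(C) ≅ G` via `π` with
`ker π = P_c(C)`. If the abelianization of `G` equals that of `G/P_{c−1}(G)`
(i.e. `P_{c−1}(G) ≤ [G,G]`), then `K = ker π` is contained in the derived subgroup
(and the center) of `C`, so `C` is a stem extension of `G`. -/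
theorem stmt_10 {p : ℕ} [Fact p.Prime] {G C : Type*} [Group G] [Group C]
    [Finite G] [Finite C] (hG : IsPGroup p G) (hC : IsPGroup p C)
    {c : ℕ} (hc1 : 1 ≤ c) (hclass : IsLeast {n | lowerPCentral p G n = ⊥} c)
    (π : C →* G) (hsurj : Function.Surjective π)
    (hker : π.ker = lowerPCentral p C c)
    (hCclass : lowerPCentral p C (c + 1) = ⊥)
    (hab : lowerPCentral p G (c - 1) ≤ commutator G) :
    π.ker ≤ commutator C ⊓ Subgroup.center C :=
  stmt_10_general hc1 π hsurj hker hCclass hab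
end

section
/- Let G be a finite group and 1 → K → C → G → 1 a stem extension (K ≤ Z(C) ∩ [C,C]). Then |K| divides |M(G)|, the order of the Schur multiplier of G. In particular, if M(G) = 1 then every stem extension of G is trivial (K = 1). -/
/-!
Lift a free presentation `π : F ↠ G` along the stem extension `ρ : C ↠ G` to `σ : F →* C`.
Since `σ` sends `R = ker π` into `K = ker ρ ≤ Z(C)`, it kills `[F, R]`, so it induces a
homomorphism from `M(G) = (R ∩ [F,F]) / [F,R]` to `K`. As `C = σ(F) · Z(C)`, every commutator of
`C` is the image of a commutator of `F`, so `[C,C] = σ([F,F])`; together with `K ≤ [C,C]` this makes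
the induced map onto `K`.
-/

/-- The Schur multiplier of `G`, computed via the Hopf formula `(R ∩ [F,F])/[F,R]` for a
free presentation `π : F ↠ G` with kernel `R`. -/
def schurMultiplier {ι : Type*} {G : Type*} [Group G] (π : FreeGroup ι →* G) : Type _ :=
  (↥(π.ker ⊓ commutator (FreeGroup ι))) ⧸
    (Subgroup.subgroupOf ⁅(⊤ : Subgroup (FreeGroup ι)), π.ker⁆
      (π.ker ⊓ commutator (FreeGroup ι)))

open scoped commutatorElement

section

variable {F C G : Type*} [Group F] [Group C] [Group G]

theorem commutatorElement_mul_mul_of_mem_center {a b z w : C} (hz : z ∈ Subgroup.center C)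
    (hw : w ∈ Subgroup.center C) : ⁅a * z, b * w⁆ = ⁅a, b⁆ := by
  have hz' := Subgroup.mem_center_iff.mp hz
  have hw' := Subgroup.mem_center_iff.mp hw
  simp only [commutatorElement_def, mul_inv_rev, mul_assoc]
  rw [← mul_assoc z b, ← hz' b, mul_assoc b z, ← mul_assoc z w, ← hz' w, mul_assoc w z,
    mul_inv_cancel_left, ← mul_assoc w a⁻¹, ← hw' a⁻¹, mul_assoc a⁻¹ w, mul_inv_cancel_left]

theorem FreeGroup.exists_comp_eq_of_surjective {ι : Type*} (π : FreeGroup ι →* G) {ρ : C →* G}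
    (hρ : Function.Surjective ρ) : ∃ σ : FreeGroup ι →* C, ρ.comp σ = π :=
  ⟨FreeGroup.lift fun i => Function.surjInv hρ (π (FreeGroup.of i)),
    FreeGroup.ext_hom _ _ fun i => by simp [Function.surjInv_eq hρ]⟩

theorem commutator_top_le_ker_of_map_le_center {σ : F →* C} {N : Subgroup F}
    (hN : N.map σ ≤ Subgroup.center C) : ⁅(⊤ : Subgroup F), N⁆ ≤ σ.ker := by
  rw [Subgroup.commutator_le]
  intro g _ r hr
  rw [MonoidHom.mem_ker, map_commutatorElement, commutatorElement_eq_one_iff_commute]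
  exact Subgroup.mem_center_iff.mp (hN (Subgroup.mem_map_of_mem σ hr)) (σ g)

theorem commutator_le_map_commutator_of_ker_le_center {π : F →* G} {ρ : C →* G} {σ : F →* C}
    (hπ : Function.Surjective π) (hσ : ρ.comp σ = π) (hK : ρ.ker ≤ Subgroup.center C) :
    commutator C ≤ (commutator F).map σ := by
  have hdecomp : ∀ c : C, ∃ f : F, ∃ z ∈ Subgroup.center C, c = σ f * z := by
    intro c
    obtain ⟨f, hf⟩ := hπ (ρ c)
    refine ⟨f, (σ f)⁻¹ * c, hK ?_, (mul_inv_cancel_left _ _).symm⟩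
    rw [MonoidHom.mem_ker, map_mul, map_inv, ← MonoidHom.comp_apply, hσ, hf, inv_mul_cancel]
  rw [commutator_def, Subgroup.commutator_le]
  intro c₁ _ c₂ _
  obtain ⟨f₁, z₁, hz₁, rfl⟩ := hdecomp c₁
  obtain ⟨f₂, z₂, hz₂, rfl⟩ := hdecomp c₂
  rw [commutatorElement_mul_mul_of_mem_center hz₁ hz₂, ← map_commutatorElement]
  exact Subgroup.mem_map_of_mem σ (Subgroup.commutator_mem_commutator trivial trivial)

end

namespace schurMultiplier

variable {ι G C : Type*} [Group G] [Group C] {π : FreeGroup ι →* G} {ρ : C →* G}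

instance instGroup (π : FreeGroup ι →* G) : Group (schurMultiplier π) := by
  unfold schurMultiplier; infer_instance

theorem map_mem_ker {σ : FreeGroup ι →* C} (hσ : ρ.comp σ = π) {f : FreeGroup ι}
    (hf : f ∈ π.ker) : σ f ∈ ρ.ker := by
  rwa [MonoidHom.mem_ker, ← MonoidHom.comp_apply, hσ]

def toKer (σ : FreeGroup ι →* C) (hσ : ρ.comp σ = π) (hK : ρ.ker ≤ Subgroup.center C) :
    schurMultiplier π →* ρ.ker :=
  QuotientGroup.lift _
    (((σ.comp (π.ker ⊓ commutator _).subtype).codRestrict ρ.ker) fun f =>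
      map_mem_ker hσ (Subgroup.mem_inf.mp f.2).1)
    fun _ hf => Subtype.ext <| commutator_top_le_ker_of_map_le_center
      (Subgroup.map_le_iff_le_comap.mpr fun _ hr => hK (map_mem_ker hσ hr)) hf

theorem toKer_surjective (hπ : Function.Surjective π) {σ : FreeGroup ι →* C}
    (hσ : ρ.comp σ = π) (hstem : ρ.ker ≤ Subgroup.center C ⊓ commutator C) :
    Function.Surjective (toKer σ hσ (hstem.trans inf_le_left)) := by
  rintro ⟨k, hk⟩
  obtain ⟨f, hf, rfl⟩ := commutator_le_map_commutator_of_ker_le_center hπ hσ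
    (hstem.trans inf_le_left) (Subgroup.mem_inf.mp (hstem hk)).2
  have hfR : f ∈ π.ker := by rwa [MonoidHom.mem_ker, ← hσ]
  exact ⟨QuotientGroup.mk ⟨f, Subgroup.mem_inf.mpr ⟨hfR, hf⟩⟩, rfl⟩

end schurMultiplier

theorem stmt_18_general {G : Type*} [Group G] {ι : Type*}
    (π : FreeGroup ι →* G) (hπ : Function.Surjective π)
    {C : Type*} [Group C] (ρ : C →* G) (hρ : Function.Surjective ρ)
    (hstem : ρ.ker ≤ Subgroup.center C ⊓ commutator C) :
    Nat.card ρ.ker ∣ Nat.card (schurMultiplier π) ∧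
    (Nat.card (schurMultiplier π) = 1 → ρ.ker = ⊥) := by
  obtain ⟨σ, hσ⟩ := FreeGroup.exists_comp_eq_of_surjective π hρ
  have hdvd := Subgroup.card_dvd_of_surjective _ (schurMultiplier.toKer_surjective hπ hσ hstem)
  refine ⟨hdvd, fun h => Subgroup.eq_bot_of_card_eq _ ?_⟩
  rwa [h, Nat.dvd_one] at hdvd

/-- Let `G` be a finite group and `1 → K → C → G → 1` a stem extension
(`K ≤ Z(C) ∩ [C,C]`). Then `|K|` divides the order of the Schur multiplier `M(G)`
(computed via the Hopf formula from any free presentation of `G`). In particular, if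
`M(G)` is trivial then every stem extension of `G` is trivial. -/
theorem stmt_18 {G : Type*} [Group G] [Finite G] {ι : Type*}
    (π : FreeGroup ι →* G) (hπ : Function.Surjective π)
    {C : Type*} [Group C] (ρ : C →* G) (hρ : Function.Surjective ρ)
    (hstem : ρ.ker ≤ Subgroup.center C ⊓ commutator C) :
    Nat.card ρ.ker ∣ Nat.card (schurMultiplier π) ∧
    (Nat.card (schurMultiplier π) = 1 → ρ.ker = ⊥) :=
  stmt_18_general π hπ ρ hρ hstem
end
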